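/- arXiv:1204.2104 — 3 statements merged into one kernel-verified Lean document; each statement's English description precedes it below -/
import Mathlib

section
/- Let E and F be finite-dimensional real inner product spaces, let φ : E → F be a smooth (C^∞) map and V : E → E a smooth vector field. Define the Laplacian of a smooth map ψ : E → F by Δψ(x) = Σ_i D²ψ(x)(e_i, e_i), where (e_i) is an orthonormal basis of E and D²ψ(x) is the second Fréchet derivative. Then the map W : E → F, W(x) = Dφ(x)(V(x)), satisfies for every x ∈ E: ΔW(x) = Dφ(x)(ΔV(x)) + D(Δφ)(x)(V(x)) + 2 Σ_i D²φ(x)(e_i, DV(x)(e_i)). (This is the paper's Proposition 2.1 — the commutation formula (tr(∇^φ)² + Ric^φ)(dφ(V)) = dφ((tr∇² + Ric)V) + ∇^φ_V τ(φ) + 2 tr ∇dφ(·, ∇_· V) — specialized to flat domain and codomain, where the curvature terms vanish, the second fundamental form is the second derivative, and the tension field is the componentwise Laplacian.) -/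
/-- The (componentwise/rough) Laplacian of a map `ψ : E → F` with respect to an
orthonormal basis `b` of `E`: `Δψ(x) = Σ_i D²ψ(x)(bᵢ, bᵢ)`. -/
noncomputable def lap {E : Type*} [NormedAddCommGroup E] [InnerProductSpace ℝ E]
    {F : Type*} [NormedAddCommGroup F] [NormedSpace ℝ F]
    {ι : Type*} [Fintype ι] (b : OrthonormalBasis ι ℝ E) (ψ : E → F) (x : E) : F :=
  ∑ i, fderiv ℝ (fderiv ℝ ψ) x (b i) (b i)

/-- Evaluation at a fixed vector commutes with `fderiv`. -/
lemma fderiv_eval_const {E G H : Type*} [NormedAddCommGroup E] [NormedSpace ℝ E]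
    [NormedAddCommGroup G] [NormedSpace ℝ G] [NormedAddCommGroup H] [NormedSpace ℝ H]
    {c : E → G →L[ℝ] H} {x : E} (hc : DifferentiableAt ℝ c x) (v : G) (k : E) :
    fderiv ℝ (fun y => c y v) x k = fderiv ℝ c x k v := by
  have h : HasFDerivAt (fun y => c y v)
      ((ContinuousLinearMap.apply ℝ H v).comp (fderiv ℝ c x)) x :=
    (ContinuousLinearMap.apply ℝ H v).hasFDerivAt.comp x hc.hasFDerivAt
  rw [h.fderiv]; rfl

/-- Pointwise product-rule for applying a CLM-valued function to a vector-valued one. -/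
lemma fderiv_clm_apply' {E G H : Type*} [NormedAddCommGroup E] [NormedSpace ℝ E]
    [NormedAddCommGroup G] [NormedSpace ℝ G] [NormedAddCommGroup H] [NormedSpace ℝ H]
    {c : E → G →L[ℝ] H} {u : E → G} {x : E} (hc : DifferentiableAt ℝ c x)
    (hu : DifferentiableAt ℝ u x) (k : E) :
    fderiv ℝ (fun y => c y (u y)) x k = fderiv ℝ c x k (u x) + c x (fderiv ℝ u x k) := by
  rw [fderiv_clm_apply hc hu]
  simp [add_comm]

/-- Proposition 2.1 of the paper, specialized to flat domain and codomain:
for a smooth map `φ : E → F` and a smooth vector field `V : E → E`, the map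
`W(x) = Dφ(x)(V(x))` satisfies
`ΔW = dφ(ΔV) + D(Δφ)(V) + 2 Σ_i D²φ(bᵢ, DV(bᵢ))`. -/
theorem bitension_commutation_flat
    {E : Type*} [NormedAddCommGroup E] [InnerProductSpace ℝ E] [FiniteDimensional ℝ E]
    {F : Type*} [NormedAddCommGroup F] [InnerProductSpace ℝ F] [FiniteDimensional ℝ F]
    {ι : Type*} [Fintype ι] (b : OrthonormalBasis ι ℝ E)
    (φ : E → F) (V : E → E) (hφ : ContDiff ℝ (⊤ : ℕ∞) φ) (hV : ContDiff ℝ (⊤ : ℕ∞) V) (x : E) :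
    lap b (fun y => fderiv ℝ φ y (V y)) x =
      fderiv ℝ φ x (lap b V x) + fderiv ℝ (lap b φ) x (V x) +
        (2 : ℝ) • ∑ i, fderiv ℝ (fderiv ℝ φ) x (b i) (fderiv ℝ V x (b i)) := by
  classical
  set A := fderiv ℝ φ with hAdef
  set B := fderiv ℝ A with hBdef
  set Cf := fderiv ℝ B with hCdef
  set DV := fderiv ℝ V with hDVdef
  set D2V := fderiv ℝ DV with hD2Vdef
  have hA : ContDiff ℝ (⊤ : ℕ∞) A := hφ.fderiv_right (by simp)
  have hB : ContDiff ℝ (⊤ : ℕ∞) B := hA.fderiv_right (by simp)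
  have hDV : ContDiff ℝ (⊤ : ℕ∞) DV := hV.fderiv_right (by simp)
  have hAd : Differentiable ℝ A := hA.differentiable (by simp)
  have hBd : Differentiable ℝ B := hB.differentiable (by simp)
  have hVd : Differentiable ℝ V := hV.differentiable (by simp)
  have hDVd : Differentiable ℝ DV := hDV.differentiable (by simp)
  set W : E → F := fun y => A y (V y) with hWdef
  have hW : ContDiff ℝ (⊤ : ℕ∞) W := hA.clm_apply hV
  have hWfd : Differentiable ℝ (fderiv ℝ W) := (hW.fderiv_right (m := (⊤ : ℕ∞)) (by simp)).differentiable (by simp)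
  -- first derivative of W applied to a fixed vector
  have hW1 : ∀ h : E, (fun y => fderiv ℝ W y h) =
      fun y => B y h (V y) + A y (DV y h) := by
    intro h
    funext y
    exact fderiv_clm_apply' (hAd y) (hVd y) h
  -- symmetry facts
  have symB : ∀ y v w, B y v w = B y w v := fun y =>
    second_derivative_symmetric (fun z => (hφ.differentiable (by simp) z).hasFDerivAt)
      (hAd y).hasFDerivAt
  have symA : ∀ v w, Cf x v w = Cf x w v :=
    second_derivative_symmetric (fun z => (hAd z).hasFDerivAt) (hBd x).hasFDerivAt
  have dBv : ∀ (v : E), Differentiable ℝ (fun y => B y v) := by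
    intro v y
    exact (hBd y).clm_apply (differentiableAt_const v)
  have evB : ∀ (v k : E), fderiv ℝ (fun y => B y v) x k = Cf x k v :=
    fun v k => fderiv_eval_const (hBd x) v k
  have symC : ∀ k v w, Cf x k v w = Cf x k w v := by
    intro k v w
    have h1 : (fun y => B y v w) = (fun y => B y w v) := funext fun y => symB y v w
    have e1 : fderiv ℝ (fun y => B y v w) x k = Cf x k v w := by
      rw [fderiv_eval_const (dBv v x) w k, evB v k]
    have e2 : fderiv ℝ (fun y => B y w v) x k = Cf x k w v := by
      rw [fderiv_eval_const (dBv w x) v k, evB w k]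
    rw [← e1, ← e2, h1]
  -- the second derivative of W, summand by summand
  have key : ∀ i, fderiv ℝ (fderiv ℝ W) x (b i) (b i) =
      Cf x (b i) (b i) (V x) + A x (D2V x (b i) (b i)) +
        (2:ℝ) • (B x (b i) (DV x (b i))) := by
    intro i
    have e0 : fderiv ℝ (fderiv ℝ W) x (b i) (b i) =
        fderiv ℝ (fun y => fderiv ℝ W y (b i)) x (b i) :=
      (fderiv_eval_const (hWfd x) (b i) (b i)).symm
    rw [e0, hW1 (b i)]
    have d1 : DifferentiableAt ℝ (fun y => B y (b i) (V y)) x :=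
      ((dBv (b i)) x).clm_apply (hVd x)
    have d2 : DifferentiableAt ℝ (fun y => A y (DV y (b i))) x := by
      refine (hAd x).clm_apply ?_
      exact (hDVd x).clm_apply (differentiableAt_const (b i))
    rw [fderiv_fun_add d1 d2]
    simp only [ContinuousLinearMap.add_apply]
    have t1 : fderiv ℝ (fun y => B y (b i) (V y)) x (b i) =
        Cf x (b i) (b i) (V x) + B x (b i) (DV x (b i)) := by
      rw [fderiv_clm_apply' (dBv (b i) x) (hVd x) (b i)]
      rw [evB (b i) (b i)]
    have t2 : fderiv ℝ (fun y => A y (DV y (b i))) x (b i) =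
        B x (b i) (DV x (b i)) + A x (D2V x (b i) (b i)) := by
      rw [fderiv_clm_apply' (hAd x) ((hDVd x).clm_apply (differentiableAt_const (b i))) (b i)]
      rw [fderiv_eval_const (hDVd x) (b i) (b i)]
    rw [t1, t2, two_smul]
    abel
  -- derivative of lap b φ
  have dlapφ : fderiv ℝ (lap b φ) x (V x) = ∑ i, Cf x (b i) (b i) (V x) := by
    have hl : lap b φ = fun y => ∑ i, B y (b i) (b i) := rfl
    rw [hl]
    have hd : ∀ i ∈ Finset.univ, DifferentiableAt ℝ (fun y => B y (b i) (b i)) x :=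
      fun i _ => (dBv (b i) x).clm_apply (differentiableAt_const (b i))
    rw [fderiv_fun_sum hd]
    simp only [ContinuousLinearMap.sum_apply]
    refine Finset.sum_congr rfl fun i _ => ?_
    rw [fderiv_eval_const (dBv (b i) x) (b i) (V x), evB (b i) (V x)]
    have : Cf x (V x) (b i) = Cf x (b i) (V x) := symA (V x) (b i)
    rw [this]
    exact symC (b i) (V x) (b i)
  have dlapV : fderiv ℝ φ x (lap b V x) = ∑ i, A x (D2V x (b i) (b i)) := by
    show A x (∑ i, D2V x (b i) (b i)) = _
    rw [map_sum]
  show ∑ i, fderiv ℝ (fderiv ℝ W) x (b i) (b i) = _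
  rw [dlapV, dlapφ]
  calc ∑ i, fderiv ℝ (fderiv ℝ W) x (b i) (b i)
      = ∑ i, (Cf x (b i) (b i) (V x) + A x (D2V x (b i) (b i)) +
          (2:ℝ) • (B x (b i) (DV x (b i)))) := Finset.sum_congr rfl fun i _ => key i
    _ = _ := by rw [Finset.sum_add_distrib, Finset.sum_add_distrib, ← Finset.smul_sum]; abel
end

section
/- Let γ : ℝ⁴ \ {0} → ℝ be defined by γ(x) = −log(‖x‖²), where ‖·‖ is the Euclidean norm. Then for every x ≠ 0, Δγ(x) + ‖∇γ(x)‖² = 0, where Δγ(x) = Σ_{i=1}^{4} ∂²γ/∂x_i²(x) is the Euclidean Laplacian and ∇γ(x) is the Euclidean gradient. (This is the key analytic verification in the paper's Example 5.2: the conformal factor γ satisfies equation Δγ + ((m−2)/2)|∇γ|² = 0 with m = 4, so that any holomorphic map from (ℂ² \ {0}, |z|^{−4}·can) into a (1,2)-symplectic almost Hermitian manifold is biharmonic.) -/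
open Filter Topology
open scoped RealInnerProductSpace

theorem lap_congr_of_eventuallyEq {E F ι : Type*} [NormedAddCommGroup E] [InnerProductSpace ℝ E]
    [NormedAddCommGroup F] [NormedSpace ℝ F] [Fintype ι] (b : OrthonormalBasis ι ℝ E)
    {f g : E → F} {x : E} (h : f =ᶠ[𝓝 x] g) : lap b f x = lap b g x := by
  simp only [lap, h.fderiv.fderiv_eq]

section LogNormSq

variable {E : Type*} [NormedAddCommGroup E] [InnerProductSpace ℝ E] {x : E}

theorem hasFDerivAt_neg_log_norm_sq (hx : x ≠ 0) :
    HasFDerivAt (fun y : E => -Real.log (‖y‖ ^ 2)) ((-2 / ‖x‖ ^ 2) • innerSL ℝ x) x := by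
  have hx2 : ‖x‖ ^ 2 ≠ 0 := by positivity
  refine ((hasStrictFDerivAt_norm_sq x).hasFDerivAt.log hx2).neg.congr_fderiv ?_
  ext v
  simp only [neg_apply, smul_apply, coe_innerSL_apply, nsmul_eq_mul, Nat.cast_ofNat, smul_eq_mul]
  ring

theorem fderiv_neg_log_norm_sq_eventuallyEq (hx : x ≠ 0) :
    fderiv ℝ (fun y : E => -Real.log (‖y‖ ^ 2)) =ᶠ[𝓝 x]
      fun y => (-2 / ‖y‖ ^ 2) • innerSL ℝ y := by
  filter_upwards [isOpen_ne.mem_nhds hx] with y hy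
  exact (hasFDerivAt_neg_log_norm_sq hy).fderiv

theorem fderiv_fderiv_neg_log_norm_sq_apply (hx : x ≠ 0) (v w : E) :
    fderiv ℝ (fderiv ℝ fun y : E => -Real.log (‖y‖ ^ 2)) x v w =
      -2 / ‖x‖ ^ 2 * ⟪v, w⟫ + 4 / ‖x‖ ^ 4 * (⟪x, v⟫ * ⟪x, w⟫) := by
  have hx2 : ‖x‖ ^ 2 ≠ 0 := by positivity
  have hcoeff : HasFDerivAt (fun y : E => -2 / ‖y‖ ^ 2)
      ((-2 : ℝ) • (-((‖x‖ ^ 2) ^ 2)⁻¹ • (2 • innerSL ℝ x))) x := by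
    simpa only [div_eq_mul_inv, Function.comp_def] using
      ((hasDerivAt_inv hx2).comp_hasFDerivAt x (hasStrictFDerivAt_norm_sq x).hasFDerivAt).const_mul
        (-2 : ℝ)
  have hfield : HasFDerivAt (fun y : E => (-2 / ‖y‖ ^ 2) • innerSL ℝ y) _ x :=
    hcoeff.smul (innerSL ℝ : E →L[ℝ] E →L[ℝ] ℝ).hasFDerivAt
  rw [(fderiv_neg_log_norm_sq_eventuallyEq hx).fderiv_eq, hfield.fderiv]
  simp only [add_apply, smul_apply, ContinuousLinearMap.smulRight_apply, coe_innerSL_apply,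
    nsmul_eq_mul, Nat.cast_ofNat, smul_eq_mul]
  -- `HasFDerivAt.smul` leaves `innerSL ℝ v` behind a different (defeq) normed-field instance path
  erw [innerSL_apply_apply]
  field_simp
  ring

theorem hasGradientAt_neg_log_norm_sq [CompleteSpace E] (hx : x ≠ 0) :
    HasGradientAt (fun y : E => -Real.log (‖y‖ ^ 2)) ((-2 / ‖x‖ ^ 2) • x) x := by
  rw [hasGradientAt_iff_hasFDerivAt, map_smul]
  exact hasFDerivAt_neg_log_norm_sq hx

theorem norm_gradient_neg_log_norm_sq_sq [CompleteSpace E] (hx : x ≠ 0) :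
    ‖gradient (fun y : E => -Real.log (‖y‖ ^ 2)) x‖ ^ 2 = 4 / ‖x‖ ^ 2 := by
  have hx' : ‖x‖ ≠ 0 := norm_ne_zero_iff.mpr hx
  rw [(hasGradientAt_neg_log_norm_sq hx).gradient, norm_smul, mul_pow, Real.norm_eq_abs, sq_abs]
  field_simp
  ring

theorem lap_neg_log_norm_sq {ι : Type*} [Fintype ι] (b : OrthonormalBasis ι ℝ E) (hx : x ≠ 0) :
    lap b (fun y : E => -Real.log (‖y‖ ^ 2)) x = (4 - 2 * Fintype.card ι) / ‖x‖ ^ 2 := by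
  have hx' : ‖x‖ ≠ 0 := norm_ne_zero_iff.mpr hx
  have hsum : ∑ i, ⟪x, b i⟫ * ⟪x, b i⟫ = ‖x‖ ^ 2 := by
    simp_rw [← real_inner_self_eq_norm_sq, ← b.sum_inner_mul_inner x x, real_inner_comm x]
  simp only [lap, fderiv_fderiv_neg_log_norm_sq_apply hx, real_inner_self_eq_norm_sq, b.norm_eq_one,
    Finset.sum_add_distrib, ← Finset.mul_sum, hsum, Finset.sum_const, Finset.card_univ,
    nsmul_eq_mul]
  field_simp
  ring

end LogNormSq

theorem lap_add_norm_gradient_sq_neg_log_norm_sq {E ι : Type*} [NormedAddCommGroup E]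
    [InnerProductSpace ℝ E] [CompleteSpace E] [Fintype ι] (b : OrthonormalBasis ι ℝ E) {x : E}
    (hx : x ≠ 0) :
    lap b (fun y : E => -Real.log (‖y‖ ^ 2)) x +
      (Fintype.card ι - 2) / 2 * ‖gradient (fun y : E => -Real.log (‖y‖ ^ 2)) x‖ ^ 2 = 0 := by
  have hx' : ‖x‖ ≠ 0 := norm_ne_zero_iff.mpr hx
  rw [lap_neg_log_norm_sq b hx, norm_gradient_neg_log_norm_sq_sq hx]
  field_simp
  ring

/-- Example 5.2 of the paper (key analytic verification, n = 2):
`γ(x) = -log(‖x‖²)` on `ℝ⁴ \ {0}` satisfies `Δγ + ‖∇γ‖² = 0`. -/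
theorem example_C2_conformal_factor
    (γ : EuclideanSpace ℝ (Fin 4) → ℝ)
    (hγ : ∀ x : EuclideanSpace ℝ (Fin 4), x ≠ 0 → γ x = -Real.log (‖x‖ ^ 2)) :
    ∀ x : EuclideanSpace ℝ (Fin 4), x ≠ 0 →
      lap (EuclideanSpace.basisFun (Fin 4) ℝ) γ x + ‖gradient γ x‖ ^ 2 = 0 := by
  intro x hx
  have hγx : γ =ᶠ[𝓝 x] fun y => -Real.log (‖y‖ ^ 2) := by
    filter_upwards [isOpen_ne.mem_nhds hx] with y hy
    exact hγ y hy
  have hm := lap_add_norm_gradient_sq_neg_log_norm_sq (EuclideanSpace.basisFun (Fin 4) ℝ) hx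
  rw [Fintype.card_fin] at hm
  rw [lap_congr_of_eventuallyEq _ hγx, hγx.gradient_eq]
  linarith
end

section
/- Let n ≥ 4 be an integer and α₁, …, α_n real numbers with α_k > 0 for at least one k. Let Q : ℝ^{2n} → ℝ be Q(x) = Σ_{k=1}^{n} (α_k/2)(x_{2k−1}² + x_{2k}²) and set γ = (1/(n−3)) log ∘ Q on the nonempty open set U = {x : Q(x) > 0}. Then there exists x ∈ U such that Δγ(x) + (n−1)‖∇γ(x)‖² ≠ 0. (This is the impossibility part of the paper's Example 5.2: for complex dimension n ≥ 4 the candidate conformal factor never satisfies the equation Δγ + ((m−2)/2)|∇γ|² = 0 with m = 2n; the equation forces n = 2.) -/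
open Real InnerProductSpace Filter Topology Matrix
open scoped RealInnerProductSpace

section LogOfQuadratic

variable {E : Type*} [NormedAddCommGroup E] [InnerProductSpace ℝ E] [CompleteSpace E]
  {T : E →L[ℝ] E} {Q γ : E → ℝ} {c : ℝ} {x : E}

theorem hasGradientAt_inner_self_div_two (hT : (T : E →ₗ[ℝ] E).IsSymmetric) (x : E) :
    HasGradientAt (fun y => ⟪T y, y⟫ / 2) (T x) x := by
  rw [hasGradientAt_iff_hasFDerivAt]
  simp only [div_eq_mul_inv]
  refine ((T.hasFDerivAt.inner ℝ (hasFDerivAt_id x)).mul_const 2⁻¹).congr_fderiv ?_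
  ext v
  have hsymm : ⟪T v, x⟫ = ⟪T x, v⟫ := (hT v x).trans (real_inner_comm _ _)
  simp [hsymm]
  ring

theorem isOpen_setOf_pos_of_hasGradientAt (hQ : ∀ y, HasGradientAt Q (T y) y) : IsOpen {y | 0 < Q y} :=
  isOpen_lt continuous_const
    (continuous_iff_continuousAt.2 fun y => (hQ y).hasFDerivAt.continuousAt)

theorem hasFDerivAt_of_eq_mul_log (hQ : ∀ y, HasGradientAt Q (T y) y)
    (hγ : ∀ y, 0 < Q y → γ y = c * log (Q y)) (hx : 0 < Q x) :
    HasFDerivAt γ ((c / Q x) • innerSL ℝ (T x)) x := by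
  have hloc : γ =ᶠ[𝓝 x] fun y => c * log (Q y) :=
    eventually_of_mem ((isOpen_setOf_pos_of_hasGradientAt hQ).mem_nhds hx) hγ
  refine (((hQ x).hasFDerivAt.log hx.ne').const_mul c).congr_of_eventuallyEq hloc
    |>.congr_fderiv ?_
  ext v
  simp
  ring

theorem gradient_eq_of_eq_mul_log (hQ : ∀ y, HasGradientAt Q (T y) y)
    (hγ : ∀ y, 0 < Q y → γ y = c * log (Q y)) (hx : 0 < Q x) :
    gradient γ x = (c / Q x) • T x := by
  refine HasGradientAt.gradient ?_
  rw [hasGradientAt_iff_hasFDerivAt]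
  refine (hasFDerivAt_of_eq_mul_log hQ hγ hx).congr_fderiv ?_
  ext v
  simp

theorem fderiv_fderiv_of_eq_mul_log (hQ : ∀ y, HasGradientAt Q (T y) y)
    (hγ : ∀ y, 0 < Q y → γ y = c * log (Q y)) (hx : 0 < Q x) (v w : E) :
    fderiv ℝ (fderiv ℝ γ) x v w
      = c / Q x * ⟪T v, w⟫ - c / Q x ^ 2 * (⟪T x, v⟫ * ⟪T x, w⟫) := by
  have hloc : fderiv ℝ γ =ᶠ[𝓝 x] fun y => (c / Q y) • innerSL ℝ (T y) :=
    eventually_of_mem ((isOpen_setOf_pos_of_hasGradientAt hQ).mem_nhds hx) fun y hy =>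
      (hasFDerivAt_of_eq_mul_log hQ hγ hy).fderiv
  have hcoef : HasFDerivAt (fun y => c / Q y) ((-(c / Q x ^ 2)) • innerSL ℝ (T x)) x := by
    simp only [div_eq_mul_inv]
    refine (((hasDerivAt_inv hx.ne').comp_hasFDerivAt x (hQ x).hasFDerivAt).const_mul c)
      |>.congr_fderiv ?_
    ext v
    simp
    ring
  have hlin : HasFDerivAt (fun y => innerSL ℝ (T y))
      ((innerSL ℝ : E →L[ℝ] E →L[ℝ] ℝ) ∘L T) x :=
    ((innerSL ℝ : E →L[ℝ] E →L[ℝ] ℝ) ∘L T).hasFDerivAt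
  rw [hloc.fderiv_eq, (hcoef.fun_smul hlin).fderiv]
  change c / Q x * ⟪T v, w⟫ + _ = _
  simp
  ring

theorem lap_of_eq_mul_log {ι : Type*} [Fintype ι] (b : OrthonormalBasis ι ℝ E)
    (hQ : ∀ y, HasGradientAt Q (T y) y) (hγ : ∀ y, 0 < Q y → γ y = c * log (Q y))
    (hx : 0 < Q x) :
    lap b γ x = c / Q x * LinearMap.trace ℝ E T - c / Q x ^ 2 * ‖T x‖ ^ 2 := by
  simp only [lap, fderiv_fderiv_of_eq_mul_log hQ hγ hx, Finset.sum_sub_distrib,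
    ← Finset.mul_sum, LinearMap.trace_eq_sum_inner _ b, ContinuousLinearMap.coe_coe]
  rw [← real_inner_self_eq_norm_sq, ← b.sum_inner_mul_inner]
  simp only [real_inner_comm (b _)]

theorem lap_add_mul_norm_gradient_sq_of_eq_mul_log {ι : Type*} [Fintype ι]
    (b : OrthonormalBasis ι ℝ E) (hQ : ∀ y, HasGradientAt Q (T y) y)
    (hγ : ∀ y, 0 < Q y → γ y = c * log (Q y)) (hx : 0 < Q x) (μ : ℝ) :
    lap b γ x + μ * ‖gradient γ x‖ ^ 2
      = c / Q x ^ 2 * (LinearMap.trace ℝ E T * Q x + (μ * c - 1) * ‖T x‖ ^ 2) := by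
  rw [lap_of_eq_mul_log b hQ hγ hx, gradient_eq_of_eq_mul_log hQ hγ hx, norm_smul,
    mul_pow, Real.norm_eq_abs, sq_abs]
  field_simp
  ring

end LogOfQuadratic

theorem Fin.sum_univ_two_mul {M : Type*} [AddCommMonoid M] {n : ℕ} (f : Fin (2 * n) → M) :
    ∑ i, f i = ∑ k : Fin n, (f ⟨2 * k, by omega⟩ + f ⟨2 * k + 1, by omega⟩) := by
  rw [← (finProdFinEquiv.trans (finCongr (Nat.mul_comm n 2))).sum_comp, Fintype.sum_prod_type]
  refine Fintype.sum_congr _ _ fun k => ?_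
  rw [Fin.sum_univ_two]
  congr 2 <;> ext <;> simp [finProdFinEquiv, Nat.mul_comm, Nat.add_comm]

section DiagonalForm

variable {ι : Type*} [Fintype ι] [DecidableEq ι]

theorem toEuclideanCLM_diagonal_apply (a : ι → ℝ) (x : EuclideanSpace ℝ ι) (i : ι) :
    toEuclideanCLM (𝕜 := ℝ) (diagonal a) x i = a i * x i := by
  rw [ofLp_toEuclideanCLM, mulVec_diagonal]

theorem isSymmetric_toEuclideanCLM_diagonal (a : ι → ℝ) :
    (toEuclideanCLM (𝕜 := ℝ) (diagonal a) : EuclideanSpace ℝ ι →ₗ[ℝ] _).IsSymmetric := by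
  rw [coe_toEuclideanCLM_eq_toEuclideanLin, isSymmetric_toEuclideanLin_iff]
  exact isHermitian_diagonal a

theorem trace_toEuclideanCLM_diagonal (a : ι → ℝ) :
    LinearMap.trace ℝ _ (toEuclideanCLM (𝕜 := ℝ) (diagonal a) : EuclideanSpace ℝ ι →ₗ[ℝ] _)
      = ∑ i, a i := by
  simp [LinearMap.trace_eq_sum_inner _ (EuclideanSpace.basisFun ι ℝ),
    EuclideanSpace.inner_single_left, toEuclideanCLM_diagonal_apply]

theorem inner_toEuclideanCLM_diagonal_self (a : ι → ℝ) (x : EuclideanSpace ℝ ι) :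
    ⟪toEuclideanCLM (𝕜 := ℝ) (diagonal a) x, x⟫ = ∑ i, a i * x i ^ 2 := by
  simp only [PiLp.inner_apply, toEuclideanCLM_diagonal_apply, RCLike.inner_apply, conj_trivial]
  exact Fintype.sum_congr _ _ fun i => by ring

theorem norm_toEuclideanCLM_diagonal_sq (a : ι → ℝ) (x : EuclideanSpace ℝ ι) :
    ‖toEuclideanCLM (𝕜 := ℝ) (diagonal a) x‖ ^ 2 = ∑ i, (a i * x i) ^ 2 := by
  simp [EuclideanSpace.norm_sq_eq, toEuclideanCLM_diagonal_apply, mul_pow]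

theorem sum_apply_single {g : ι → ℝ → ℝ} (hg : ∀ i, g i 0 = 0) (k : ι) (p : ℝ) :
    ∑ i, g i ((Pi.single k p : ι → ℝ) i) = g k p := by
  rw [Fintype.sum_eq_single k fun i hi => by simp [hi, hg]]
  simp

theorem sum_apply_single_add_single {g : ι → ℝ → ℝ} (hg : ∀ i, g i 0 = 0) {k j : ι} (h : k ≠ j)
    (p q : ℝ) : ∑ i, g i ((Pi.single k p + Pi.single j q : ι → ℝ) i) = g k p + g j q := by
  rw [Fintype.sum_eq_add k j h fun i hi => by simp [hi.1, hi.2, hg]]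
  simp [h, h.symm]

theorem exists_sum_mul_sq_pos_and_ne_zero {a : ι → ℝ} {k : ι} (hk : 0 < a k) {d : ℝ}
    (hd : 0 < d) : ∃ x : ι → ℝ, 0 < ∑ i, a i * x i ^ 2 ∧
      (∑ i, a i) * ∑ i, a i * x i ^ 2 + d * ∑ i, (a i * x i) ^ 2 ≠ 0 := by
  by_cases hsum : ∑ i, a i + d * a k = 0
  · obtain ⟨j, hj⟩ : ∃ j, a j < 0 := by
      by_contra! h
      have := Finset.sum_nonneg fun j (_ : j ∈ Finset.univ) => h j
      nlinarith
    have hjk : k ≠ j := by rintro rfl; linarith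
    have hfrac : 0 < a k / (-2 * a j) := div_pos hk (by linarith)
    set s := √(a k / (-2 * a j))
    have hs : a j * s ^ 2 = -(a k / 2) := by
      rw [sq_sqrt hfrac.le]
      field_simp [hj.ne]
    have hQ := sum_apply_single_add_single (g := fun i t => a i * t ^ 2) (by simp) hjk 1 s
    have hP := sum_apply_single_add_single (g := fun i t => (a i * t) ^ 2) (by simp) hjk 1 s
    refine ⟨Pi.single k 1 + Pi.single j s, ?_, ?_⟩ <;> rw [hQ] <;> simp only [one_pow, mul_one, hs]
    · linarith
    · rw [hP]
      have hs0 : 0 < s := sqrt_pos.2 hfrac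
      have hj0 : a j ≠ 0 := hj.ne
      have : 0 < d * (a j * s) ^ 2 := by positivity
      nlinarith
  · refine ⟨Pi.single k 1, ?_, ?_⟩
    · rw [sum_apply_single (g := fun i t => a i * t ^ 2) (by simp)]
      simpa using hk
    · rw [sum_apply_single (g := fun i t => a i * t ^ 2) (by simp),
        sum_apply_single (g := fun i t => (a i * t) ^ 2) (by simp)]
      rw [show (∑ i, a i) * (a k * 1 ^ 2) + d * (a k * 1) ^ 2 = a k * (∑ i, a i + d * a k) by
        ring]
      exact mul_ne_zero hk.ne' hsum

theorem exists_inner_toEuclideanCLM_diagonal_self_pos_and_ne_zero {a : ι → ℝ} {k : ι}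
    (hk : 0 < a k) {d : ℝ} (hd : 0 < d) :
    ∃ x : EuclideanSpace ℝ ι, 0 < ⟪toEuclideanCLM (𝕜 := ℝ) (diagonal a) x, x⟫ ∧
      LinearMap.trace ℝ _ (toEuclideanCLM (𝕜 := ℝ) (diagonal a) : EuclideanSpace ℝ ι →ₗ[ℝ] _)
          * ⟪toEuclideanCLM (𝕜 := ℝ) (diagonal a) x, x⟫
        + d * ‖toEuclideanCLM (𝕜 := ℝ) (diagonal a) x‖ ^ 2 ≠ 0 := by
  obtain ⟨x, hpos, hne⟩ := exists_sum_mul_sq_pos_and_ne_zero hk hd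
  refine ⟨WithLp.toLp 2 x, ?_, ?_⟩ <;>
    simpa only [inner_toEuclideanCLM_diagonal_self, trace_toEuclideanCLM_diagonal,
      norm_toEuclideanCLM_diagonal_sq, PiLp.toLp_apply]

end DiagonalForm

/-- Example 5.2 of the paper, impossibility for complex dimension n ≥ 4: with
`Q(x) = Σ_k (α_k/2)(x_{2k-1}² + x_{2k}²)` and `γ = (1/(n-3)) log ∘ Q` on
`U = {Q > 0}`, there is a point of `U` where `Δγ + (n-1)‖∇γ‖² ≠ 0`. -/
theorem example_Cn_impossible
    (n : ℕ) (hn : 4 ≤ n) (α : Fin n → ℝ) (hα : ∃ k, 0 < α k)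
    (Q : EuclideanSpace ℝ (Fin (2 * n)) → ℝ)
    (hQ : ∀ x : EuclideanSpace ℝ (Fin (2 * n)),
      Q x = ∑ k : Fin n, α k / 2 *
        (x ⟨2 * (k : ℕ), by have := k.isLt; omega⟩ ^ 2 +
         x ⟨2 * (k : ℕ) + 1, by have := k.isLt; omega⟩ ^ 2))
    (γ : EuclideanSpace ℝ (Fin (2 * n)) → ℝ)
    (hγ : ∀ x : EuclideanSpace ℝ (Fin (2 * n)), 0 < Q x →
      γ x = (1 / ((n : ℝ) - 3)) * Real.log (Q x)) :
    ∃ x : EuclideanSpace ℝ (Fin (2 * n)), 0 < Q x ∧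
      lap (EuclideanSpace.basisFun (Fin (2 * n)) ℝ) γ x
        + ((n : ℝ) - 1) * ‖gradient γ x‖ ^ 2 ≠ 0 := by
  obtain ⟨k, hk⟩ := hα
  set a : Fin (2 * n) → ℝ := fun i => α ⟨i / 2, by omega⟩
  set T := toEuclideanCLM (𝕜 := ℝ) (diagonal a)
  have hQT : Q = fun y => ⟪T y, y⟫ / 2 := by
    funext y
    rw [hQ, inner_toEuclideanCLM_diagonal_self, Finset.sum_div, Fin.sum_univ_two_mul]
    refine Fintype.sum_congr _ _ fun j => ?_
    have hodd : (2 * (j : ℕ) + 1) / 2 = j := by omega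
    simp [a, hodd]
    ring
  have hn3 : (0 : ℝ) < n - 3 := by
    have : (4 : ℝ) ≤ n := by exact_mod_cast hn
    linarith
  have hc : 0 < 1 / ((n : ℝ) - 3) := one_div_pos.2 hn3
  have hgrad : ∀ y, HasGradientAt Q (T y) y :=
    hQT ▸ hasGradientAt_inner_self_div_two (isSymmetric_toEuclideanCLM_diagonal a)
  obtain ⟨x, hxpos, hxne⟩ := exists_inner_toEuclideanCLM_diagonal_self_pos_and_ne_zero
    (a := a) (k := ⟨2 * k, by omega⟩) (by simpa [a] using hk) (mul_pos four_pos hc)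
  have hQx : 0 < Q x := by rw [hQT]; positivity
  refine ⟨x, hQx, ?_⟩
  rw [lap_add_mul_norm_gradient_sq_of_eq_mul_log _ hgrad hγ hQx,
    show ((n : ℝ) - 1) * (1 / ((n : ℝ) - 3)) - 1 = 2 * (1 / ((n : ℝ) - 3)) by
      field_simp; ring]
  refine mul_ne_zero (by positivity) ?_
  rw [hQT]
  contrapose! hxne
  linear_combination 2 * hxne
end
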